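/- Let c be a constraint system on 3-element subsets of a finite set V, |V| = n, with values in [0,1], and define b(π,v,p) = Σ over 2-subsets Q of V\{v} of c(Q ↦ π ⊕ v ↦ p). For any two rankings π, π' of V, any vertex v, and any non-integer p, with L, R, d(π,π') as in the FAST crossing lemma: the number of 2-subsets Q of V\{v} such that either Q ∩ (L∪R) ≠ ∅ or Q contains a pair ordered differently by π and π' is at most 2√(d(π,π'))·(n−2) + d(π,π'). Consequently |b(π,v,p) − b(π',v,p)| ≤ 2√(d(π,π'))·(n−2) + d(π,π'). -/

import Mathlib

open scoped Classical

noncomputable def pos {V : Type*} [Fintype V] (π : V ≃ Fin (Fintype.card V)) (v : V) : ℝ :=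
  ((π v : ℕ) : ℝ) + 1

def kendall {V : Type*} [Fintype V] (π π' : V ≃ Fin (Fintype.card V)) : ℕ :=
  (Finset.univ.filter (fun uv : V × V => π uv.1 < π uv.2 ∧ π' uv.2 < π' uv.1)).card

noncomputable def b3 {V : Type*} [Fintype V] [DecidableEq V]
    (c : Finset V → (V → ℝ) → ℝ) (f : V → ℝ) (v : V) (p : ℝ) : ℝ :=
  ∑ Q ∈ (Finset.univ.erase v).powersetCard 2, c (insert v Q) (Function.update f v p)

/-!
For a non-integer `p`, both rankings put the same number of vertices below `p`, so the sets
`L` and `R` of vertices that cross `p` upwards and downwards have equal size; every pair in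
`L × R` is inverted between `π` and `π'`, whence `|L| = |R| ≤ √d`. A pair `Q` of other
vertices either meets `L ∪ R` (at most `(|L| + |R|)(n - 2)` pairs), or is itself inverted (at
most `d` pairs), or else `π` and `π'` induce the same order on `Q ∪ {v}` once `v` is placed at
`p`, so the constraint on `Q ∪ {v}` contributes equally to both sums. Each of the remaining
constraints changes the sum by at most `1`.
-/

open Finset

namespace Finset

variable {α : Type*} [DecidableEq α]

theorem card_filter_powersetCard_two_exists_mem_le (s : Finset α) (P : α → Prop)
    [DecidablePred P] :
    #((s.powersetCard 2).filter fun Q => ∃ u ∈ Q, P u) ≤ #(s.filter P) * (#s - 1) := by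
  have hcover : (s.powersetCard 2).filter (fun Q => ∃ u ∈ Q, P u) ⊆
      (s.filter P).biUnion fun u => (s.erase u).image fun w => {u, w} := by
    intro Q hQ
    obtain ⟨⟨hQs, hQ2⟩, u, huQ, hu⟩ := by simpa only [mem_filter, mem_powersetCard] using hQ
    obtain ⟨x, y, hxy, rfl⟩ := card_eq_two.mp hQ2
    simp only [mem_biUnion, mem_filter, mem_image, mem_erase]
    rcases (by simpa using huQ : u = x ∨ u = y) with rfl | rfl
    · exact ⟨u, ⟨hQs (mem_insert_self _ _), hu⟩, y, ⟨hxy.symm, hQs (by simp)⟩, rfl⟩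
    · exact ⟨u, ⟨hQs (by simp), hu⟩, x, ⟨hxy, hQs (mem_insert_self _ _)⟩, pair_comm _ _⟩
  calc _ ≤ _ := card_le_card hcover
    _ ≤ ∑ u ∈ s.filter P, #((s.erase u).image fun w => ({u, w} : Finset α)) := card_biUnion_le
    _ ≤ #(s.filter P) * (#s - 1) := by
      refine sum_le_card_nsmul _ _ _ fun u hu => card_image_le.trans ?_
      rw [card_erase_of_mem (mem_filter.mp hu).1]

theorem card_filter_powersetCard_two_exists_rel_le [Fintype α] (s : Finset α)
    (r : α → α → Prop) [DecidableRel r] (hr : ∀ u, ¬ r u u) :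
    #((s.powersetCard 2).filter fun Q => ∃ u ∈ Q, ∃ u' ∈ Q, r u u') ≤
      #(univ.filter fun uu' : α × α => r uu'.1 uu'.2) := by
  have hcover : (s.powersetCard 2).filter (fun Q => ∃ u ∈ Q, ∃ u' ∈ Q, r u u') ⊆
      (univ.filter fun uu' : α × α => r uu'.1 uu'.2).image fun uu' => {uu'.1, uu'.2} := by
    intro Q hQ
    obtain ⟨⟨-, hQ2⟩, u, huQ, u', hu'Q, hr'⟩ := by
      simpa only [mem_filter, mem_powersetCard] using hQ
    have hne : u ≠ u' := by rintro rfl; exact hr u hr'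
    have hQ : {u, u'} = Q :=
      eq_of_subset_of_card_le (insert_subset huQ (singleton_subset_iff.mpr hu'Q))
        (by rw [hQ2, card_pair hne])
    exact mem_image.mpr ⟨(u, u'), mem_filter.mpr ⟨mem_univ _, hr'⟩, hQ⟩
  exact (card_le_card hcover).trans card_image_le

end Finset

theorem abs_sum_sub_sum_le_card_filter {ι : Type*} (s : Finset ι) (F G : ι → ℝ)
    (D : ι → Prop) [DecidablePred D] (hle : ∀ i ∈ s, |F i - G i| ≤ 1)
    (heq : ∀ i ∈ s, ¬ D i → F i = G i) :
    |∑ i ∈ s, F i - ∑ i ∈ s, G i| ≤ #(s.filter D) := by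
  rw [← sum_sub_distrib, ← sum_filter_of_ne fun i hi hne => by_contra fun hD =>
    hne (sub_eq_zero_of_eq (heq i hi hD))]
  calc _ ≤ ∑ i ∈ s.filter D, |F i - G i| := abs_sum_le_sum_abs _ _
    _ ≤ #(s.filter D) • (1 : ℝ) :=
      sum_le_card_nsmul _ _ _ fun i hi => hle i (mem_filter.mp hi).1
    _ = #(s.filter D) := by simp

section LinearOrder

variable {β : Type*} [LinearOrder β]

theorem lt_iff_lt_and_lt_iff_lt_of_not_separated {a b x : β} (ha : a ≠ x) (hb : b ≠ x)
    (h : ¬((a < x ∧ x < b) ∨ (b < x ∧ x < a))) : (a < x ↔ b < x) ∧ (x < a ↔ x < b) := by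
  grind

theorem lt_iff_lt_of_not_discordant {a a' b b' : β} (ha : a ≠ a') (hb : b ≠ b')
    (h : ¬(a < a' ∧ b' < b)) (h' : ¬(a' < a ∧ b < b')) : a < a' ↔ b < b' := by
  grind

end LinearOrder

theorem Function.update_lt_iff_update_lt {α β : Type*} [DecidableEq α] [LinearOrder β]
    {f g : α → β} (hf : f.Injective) (hg : g.Injective) {v : α} {p : β}
    (hfp : ∀ u, f u ≠ p) (hgp : ∀ u, g u ≠ p) {Q : Finset α} (hv : v ∉ Q)
    (hsep : ¬∃ u ∈ Q, (f u < p ∧ p < g u) ∨ (g u < p ∧ p < f u))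
    (hdisc : ¬∃ u ∈ Q, ∃ u' ∈ Q, f u < f u' ∧ g u' < g u) :
    ∀ x ∈ insert v Q, ∀ y ∈ insert v Q,
      (update f v p x < update f v p y ↔ update g v p x < update g v p y) := by
  have hside : ∀ u ∈ Q, (f u < p ↔ g u < p) ∧ (p < f u ↔ p < g u) := fun u hu =>
    lt_iff_lt_and_lt_iff_lt_of_not_separated (hfp u) (hgp u) fun h => hsep ⟨u, hu, h⟩
  have hne : ∀ u ∈ Q, u ≠ v := fun u hu huv => hv (huv ▸ hu)
  intro x hx y hy
  rcases mem_insert.mp hx with rfl | hxQ <;> rcases mem_insert.mp hy with rfl | hyQ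
  · simp
  · simpa [hne y hyQ] using (hside y hyQ).2
  · simpa [hne x hxQ] using (hside x hxQ).1
  · simp only [update_of_ne (hne x hxQ), update_of_ne (hne y hyQ)]
    by_cases hxy : x = y
    · simp [hxy]
    exact lt_iff_lt_of_not_discordant (hf.ne hxy) (hg.ne hxy) (fun h => hdisc ⟨x, hxQ, y, hyQ, h⟩)
      fun h => hdisc ⟨y, hyQ, x, hxQ, h⟩

section Ranking

variable {V : Type*} [Fintype V]

theorem pos_lt_pos_iff (σ : V ≃ Fin (Fintype.card V)) (u w : V) :
    pos σ u < pos σ w ↔ σ u < σ w := by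
  simp [pos]

theorem pos_injective (σ : V ≃ Fin (Fintype.card V)) : Function.Injective (pos σ) := by
  intro u w h
  simpa [pos, Fin.val_inj] using h

theorem pos_ne_of_forall_intCast_ne {p : ℝ} (hp : ∀ z : ℤ, (z : ℝ) ≠ p)
    (σ : V ≃ Fin (Fintype.card V)) (u : V) : pos σ u ≠ p := by
  simpa [pos] using hp ((σ u : ℕ) + 1)

theorem card_filter_pos_lt_eq (σ σ' : V ≃ Fin (Fintype.card V)) (p : ℝ) :
    #(univ.filter fun u => pos σ u < p) = #(univ.filter fun u => pos σ' u < p) :=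
  card_equiv (σ.trans σ'.symm) fun u => by
    rw [mem_filter, mem_filter]
    simp [pos]

/-- The set `L` of the crossing lemma; `R` is `crossing π' π p`. -/
noncomputable def crossing (π π' : V ≃ Fin (Fintype.card V)) (p : ℝ) : Finset V :=
  univ.filter fun u => pos π u < p ∧ p < pos π' u

theorem crossing_eq_sdiff {p : ℝ} (hp : ∀ z : ℤ, (z : ℝ) ≠ p) (π π' : V ≃ Fin (Fintype.card V)) :
    crossing π π' p = (univ.filter fun u => pos π u < p) \ univ.filter fun u => pos π' u < p := by
  ext u
  have := pos_ne_of_forall_intCast_ne hp π' u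
  simp only [crossing, mem_filter, mem_sdiff, mem_univ, true_and]
  grind

theorem card_crossing_comm {p : ℝ} (hp : ∀ z : ℤ, (z : ℝ) ≠ p)
    (π π' : V ≃ Fin (Fintype.card V)) : #(crossing π π' p) = #(crossing π' π p) := by
  rw [crossing_eq_sdiff hp, crossing_eq_sdiff hp]
  exact card_sdiff_comm (card_filter_pos_lt_eq π π' p)

theorem card_crossing_mul_card_crossing_le_kendall (π π' : V ≃ Fin (Fintype.card V)) (p : ℝ) :
    #(crossing π π' p) * #(crossing π' π p) ≤ kendall π π' := by
  rw [← card_product]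
  refine card_le_card fun uw huw => ?_
  simp only [crossing, mem_product, mem_filter, mem_univ, true_and] at huw
  simp only [mem_filter, mem_univ, true_and, ← pos_lt_pos_iff]
  exact ⟨by linarith, by linarith⟩

theorem card_crossing_add_card_crossing_le {p : ℝ} (hp : ∀ z : ℤ, (z : ℝ) ≠ p)
    (π π' : V ≃ Fin (Fintype.card V)) :
    (#(crossing π π' p) + #(crossing π' π p) : ℝ) ≤ 2 * Real.sqrt (kendall π π') := by
  have hsq : (#(crossing π π' p) : ℝ) ^ 2 ≤ kendall π π' := by
    rw [sq]; nth_rewrite 2 [card_crossing_comm hp]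
    exact_mod_cast card_crossing_mul_card_crossing_le_kendall π π' p
  have hcomm : (#(crossing π' π p) : ℝ) = #(crossing π π' p) := by
    exact_mod_cast (card_crossing_comm hp π π').symm
  linarith [Real.le_sqrt_of_sq_le hsq]

theorem kendall_eq_zero_of_card_le_one (h : Fintype.card V ≤ 1)
    (π π' : V ≃ Fin (Fintype.card V)) : kendall π π' = 0 := by
  refine card_eq_zero.mpr (filter_eq_empty_iff.mpr fun uw _ hlt => ?_)
  have hlt' := Fin.lt_def.mp hlt.1
  have := (π uw.2).isLt
  omega

end Ranking

section Constraints

variable {V : Type*} [Fintype V] [DecidableEq V]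

def Affected (π π' : V ≃ Fin (Fintype.card V)) (p : ℝ) (Q : Finset V) : Prop :=
  (∃ u ∈ Q, (pos π u < p ∧ p < pos π' u) ∨ (pos π' u < p ∧ p < pos π u)) ∨
    (∃ u ∈ Q, ∃ u' ∈ Q, pos π u < pos π u' ∧ pos π' u' < pos π' u)

theorem card_filter_affected_le {p : ℝ} (hp : ∀ z : ℤ, (z : ℝ) ≠ p)
    (π π' : V ≃ Fin (Fintype.card V)) (v : V) :
    (#(((univ.erase v).powersetCard 2).filter (Affected π π' p)) : ℝ) ≤
      2 * Real.sqrt (kendall π π') * ((Fintype.card V : ℝ) - 2) + kendall π π' := by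
  have hcard : #(univ.erase v) = Fintype.card V - 1 := by
    rw [card_erase_of_mem (mem_univ v), card_univ]
  by_cases hn : Fintype.card V ≤ 1
  · have hempty : (univ.erase v).powersetCard 2 = ∅ :=
      powersetCard_eq_empty.mpr (by omega)
    simp [hempty, kendall_eq_zero_of_card_le_one hn]
  set L := crossing π π' p
  set R := crossing π' π p
  have hsep : #(((univ.erase v).powersetCard 2).filter fun Q =>
      ∃ u ∈ Q, (pos π u < p ∧ p < pos π' u) ∨ (pos π' u < p ∧ p < pos π u)) ≤
      (#L + #R) * (Fintype.card V - 2) := by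
    refine (card_filter_powersetCard_two_exists_mem_le _ _).trans ?_
    rw [hcard, Nat.sub_sub]
    refine Nat.mul_le_mul_right _ ((card_le_card fun u hu => ?_).trans (card_union_le L R))
    simpa [L, R, crossing] using (mem_filter.mp hu).2
  have hdisc : #(((univ.erase v).powersetCard 2).filter fun Q =>
      ∃ u ∈ Q, ∃ u' ∈ Q, pos π u < pos π u' ∧ pos π' u' < pos π' u) ≤ kendall π π' := by
    refine (card_filter_powersetCard_two_exists_rel_le _ _ fun u h => lt_irrefl _ h.1).trans ?_
    simp only [kendall, pos_lt_pos_iff, le_refl]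
  have hLR := card_crossing_add_card_crossing_le hp π π'
  have hn : 2 ≤ Fintype.card V := by omega
  have hn2 : (0 : ℝ) ≤ Fintype.card V - 2 := by
    have : (2 : ℝ) ≤ Fintype.card V := by exact_mod_cast hn
    linarith
  calc (#(((univ.erase v).powersetCard 2).filter (Affected π π' p)) : ℝ)
      ≤ ((#L + #R) * (Fintype.card V - 2) + kendall π π' : ℕ) := by
        refine Nat.cast_le.mpr ((card_le_card fun Q hQ => ?_).trans
          ((card_union_le _ _).trans (Nat.add_le_add hsep hdisc)))
        rw [← filter_or, mem_filter]
        exact mem_filter.mp hQ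
    _ = (#L + #R : ℝ) * (Fintype.card V - 2) + kendall π π' := by
        push_cast [Nat.cast_sub hn]
        ring
    _ ≤ 2 * Real.sqrt (kendall π π') * (Fintype.card V - 2) + kendall π π' := by gcongr

theorem constraint_update_eq_of_not_affected (c : Finset V → (V → ℝ) → ℝ)
    (horder : ∀ (S : Finset V) (f g : V → ℝ),
      (∀ u ∈ S, ∀ u' ∈ S, (f u < f u' ↔ g u < g u')) → c S f = c S g)
    {p : ℝ} (hp : ∀ z : ℤ, (z : ℝ) ≠ p) (π π' : V ≃ Fin (Fintype.card V)) {v : V}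
    {Q : Finset V} (hv : v ∉ Q) (hQ : ¬Affected π π' p Q) :
    c (insert v Q) (Function.update (pos π) v p) = c (insert v Q) (Function.update (pos π') v p) :=
  horder _ _ _ <| Function.update_lt_iff_update_lt (pos_injective π) (pos_injective π')
    (pos_ne_of_forall_intCast_ne hp π) (pos_ne_of_forall_intCast_ne hp π') hv
    (not_or.mp hQ).1 (not_or.mp hQ).2

end Constraints

theorem stmt12 {V : Type*} [Fintype V] [DecidableEq V]
    (c : Finset V → (V → ℝ) → ℝ)
    (h01 : ∀ (S : Finset V) (f : V → ℝ), 0 ≤ c S f ∧ c S f ≤ 1)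
    (horder : ∀ (S : Finset V) (f g : V → ℝ),
      (∀ u ∈ S, ∀ u' ∈ S, (f u < f u' ↔ g u < g u')) → c S f = c S g)
    (π π' : V ≃ Fin (Fintype.card V)) (v : V) (p : ℝ) (hp : ∀ z : ℤ, (z : ℝ) ≠ p) :
    (((((Finset.univ.erase v).powersetCard 2).filter (fun Q =>
          (∃ u ∈ Q, (pos π u < p ∧ p < pos π' u) ∨ (pos π' u < p ∧ p < pos π u)) ∨
          (∃ u ∈ Q, ∃ u' ∈ Q, pos π u < pos π u' ∧ pos π' u' < pos π' u))).card : ℝ)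
        ≤ 2 * Real.sqrt (kendall π π') * ((Fintype.card V : ℝ) - 2) + (kendall π π' : ℝ))
    ∧ |b3 c (pos π) v p - b3 c (pos π') v p|
        ≤ 2 * Real.sqrt (kendall π π') * ((Fintype.card V : ℝ) - 2) + (kendall π π' : ℝ) := by
  have hcount := card_filter_affected_le hp π π' v
  refine ⟨by convert hcount; rfl, ?_⟩
  have hdiff_le_one : ∀ S f g, |c S f - c S g| ≤ 1 := fun S f g => by
    have := h01 S f; have := h01 S g
    exact abs_sub_le_iff.mpr ⟨by linarith, by linarith⟩
  calc |b3 c (pos π) v p - b3 c (pos π') v p|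
      ≤ #(((univ.erase v).powersetCard 2).filter (Affected π π' p)) :=
        abs_sum_sub_sum_le_card_filter _ _ _ _ (fun _ _ => hdiff_le_one _ _ _)
          fun Q hQ => constraint_update_eq_of_not_affected c horder hp π π' fun hv =>
            (mem_erase.mp ((mem_powersetCard.mp hQ).1 hv)).1 rfl
    _ ≤ _ := hcount
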